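/- In ℝ^5, let ∇^(1) = Conv{0, (1,1,1,0,0), (-3,1,1,0,0), (1,-3,1,0,0), (1,1,-3,0,0), (1,1,1,-4,0), (1,1,1,0,-4)} and ∇^(2) = Conv{0, (0,0,0,1,1), (-2,0,0,1,1), (0,-2,0,1,1), (0,0,-2,1,1), (0,0,0,-1,1), (0,0,0,1,-1)}. Then the Minkowski sum ∇^(1) + ∇^(2) equals Conv{0, (1,1,1,1,1), (-5,1,1,1,1), (1,-5,1,1,1), (1,1,-5,1,1), (1,1,1,-5,1), (1,1,1,1,-5)}. -/

import Mathlib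

open Pointwise

/-- `∇^(1)`, the Newton polytope of the quartic. -/
def Nabla1 : Set (Fin 5 → ℝ) :=
  convexHull ℝ
    {0, ![1, 1, 1, 0, 0], ![-3, 1, 1, 0, 0], ![1, -3, 1, 0, 0],
      ![1, 1, -3, 0, 0], ![1, 1, 1, -4, 0], ![1, 1, 1, 0, -4]}

/-- `∇^(2)`, the Newton polytope of the quadric. -/
def Nabla2 : Set (Fin 5 → ℝ) :=
  convexHull ℝ
    {0, ![0, 0, 0, 1, 1], ![-2, 0, 0, 1, 1], ![0, -2, 0, 1, 1],
      ![0, 0, -2, 1, 1], ![0, 0, 0, -1, 1], ![0, 0, 0, 1, -1]}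

/-- `∇`, the Newton polytope of anticanonical hypersurfaces in `ℙ^5`. -/
def Nabla : Set (Fin 5 → ℝ) :=
  convexHull ℝ
    {0, ![1, 1, 1, 1, 1], ![-5, 1, 1, 1, 1], ![1, -5, 1, 1, 1],
      ![1, 1, -5, 1, 1], ![1, 1, 1, -5, 1], ![1, 1, 1, 1, -5]}

/-! Each of `∇^(1)` and `∇^(2)` lies in a simplex `{x | x ≤ u ∧ c ≤ ∑ i, x i}`, with
`(u, c) = ((1,1,1,0,0), -1)` and `((0,0,0,1,1), 0)` respectively, and such simplices add by adding
`u` and `c`. The sum `((1,1,1,1,1), -1)` is the simplex spanned by `1` and the `1 - 6 eⱼ`, the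
vertices of `∇`. Conversely, every vertex of `∇` is the sum of a vertex of `∇^(1)` and one of
`∇^(2)`. -/

def cornerSimplex {ι : Type*} [Fintype ι] (u : ι → ℝ) (c : ℝ) : Set (ι → ℝ) :=
  {x | x ≤ u ∧ c ≤ ∑ i, x i}

section
variable {ι : Type*} [Fintype ι]

theorem convex_cornerSimplex (u : ι → ℝ) (c : ℝ) : Convex ℝ (cornerSimplex u c) := by
  have hsum : Convex ℝ {x : ι → ℝ | c ≤ ∑ i, x i} :=
    convex_halfSpace_ge (f := fun x : ι → ℝ => ∑ i, x i)
      ⟨fun x y => by simp [Finset.sum_add_distrib], fun r x => by simp [Finset.mul_sum]⟩ c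
  exact (convex_Iic u).inter hsum

theorem cornerSimplex_add_subset (u v : ι → ℝ) (c d : ℝ) :
    cornerSimplex u c + cornerSimplex v d ⊆ cornerSimplex (u + v) (c + d) := by
  rintro _ ⟨x, ⟨hxu, hxc⟩, y, ⟨hyv, hyd⟩, rfl⟩
  exact ⟨add_le_add hxu hyv, by simpa [Finset.sum_add_distrib] using add_le_add hxc hyd⟩

theorem cornerSimplex_subset_convexHull [DecidableEq ι] (u : ι → ℝ) {c : ℝ}
    (hc : c < ∑ i, u i) :
    cornerSimplex u c ⊆
      convexHull ℝ (insert u (Set.range fun j => u - (∑ i, u i - c) • Pi.single j 1)) := by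
  rintro x ⟨hxu, hxc⟩
  set d := ∑ i, u i - c
  have hd : 0 < d := sub_pos.2 hc
  let z : Option ι → ι → ℝ := fun o => o.elim u fun j => u - d • Pi.single j 1
  let w : Option ι → ℝ := fun o => o.elim ((∑ i, x i - c) / d) fun j => (u j - x j) / d
  have hw : ∀ o ∈ Finset.univ, 0 ≤ w o := by
    rintro (_ | j) -
    · exact div_nonneg (sub_nonneg.2 hxc) hd.le
    · exact div_nonneg (sub_nonneg.2 (hxu j)) hd.le
  have hw1 : ∑ o, w o = 1 := by
    simp only [Fintype.sum_option, w, Option.elim, ← Finset.sum_div, Finset.sum_sub_distrib]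
    field_simp
    ring
  have hz : ∀ o ∈ Finset.univ, z o ∈ insert u (Set.range fun j => u - d • Pi.single j 1) := by
    rintro (_ | j) -
    · exact Set.mem_insert _ _
    · exact Set.mem_insert_of_mem _ ⟨j, rfl⟩
  have hx : ∑ o, w o • z o = x := by
    ext i
    simp only [Fintype.sum_option, w, z, Option.elim, Finset.sum_apply, Pi.smul_apply,
      Pi.sub_apply, Pi.single_apply, smul_eq_mul, mul_sub, mul_ite, mul_one, mul_zero,
      Finset.sum_sub_distrib, Finset.sum_ite_eq, Finset.mem_univ, if_true, ← Finset.sum_mul,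
      ← Finset.sum_div]
    field_simp
    ring
  rw [← hx]
  exact (convex_convexHull ℝ _).sum_mem hw hw1 fun o ho => subset_convexHull ℝ _ (hz o ho)
end

theorem nabla1_subset_cornerSimplex :
    Nabla1 ⊆ cornerSimplex (![1, 1, 1, 0, 0] : Fin 5 → ℝ) (-1) := by
  refine convexHull_min ?_ (convex_cornerSimplex _ _)
  rintro v (rfl | rfl | rfl | rfl | rfl | rfl | rfl) <;>
    exact ⟨fun i => by fin_cases i <;> norm_num, by norm_num [Fin.sum_univ_succ]⟩

theorem nabla2_subset_cornerSimplex :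
    Nabla2 ⊆ cornerSimplex (![0, 0, 0, 1, 1] : Fin 5 → ℝ) 0 := by
  refine convexHull_min ?_ (convex_cornerSimplex _ _)
  rintro v (rfl | rfl | rfl | rfl | rfl | rfl | rfl) <;>
    exact ⟨fun i => by fin_cases i <;> norm_num, by norm_num [Fin.sum_univ_succ]⟩

theorem cornerSimplex_subset_nabla : cornerSimplex (1 : Fin 5 → ℝ) (-1) ⊆ Nabla := by
  have hd : ∑ i, (1 : Fin 5 → ℝ) i - -1 = 6 := by norm_num
  have hc := cornerSimplex_subset_convexHull (1 : Fin 5 → ℝ) (c := -1) (by norm_num)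
  rw [hd] at hc
  refine hc.trans (convexHull_mono (Set.insert_subset_iff.2 ⟨?_, Set.range_subset_iff.2 ?_⟩))
  · simp [funext_iff, Fin.forall_fin_succ]
  · intro j
    fin_cases j <;> simp [funext_iff, Fin.forall_fin_succ, Pi.single_apply] <;> norm_num

theorem nabla_subset_nabla1_add_nabla2 : Nabla ⊆ Nabla1 + Nabla2 := by
  rw [Nabla, Nabla1, Nabla2, ← convexHull_add]
  refine convexHull_mono ?_
  rintro v (rfl | rfl | rfl | rfl | rfl | rfl | rfl)
  · exact ⟨0, by simp, 0, by simp, by simp⟩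
  · exact ⟨![1, 1, 1, 0, 0], by simp, ![0, 0, 0, 1, 1], by simp, by norm_num⟩
  · exact ⟨![-3, 1, 1, 0, 0], by simp, ![-2, 0, 0, 1, 1], by simp, by norm_num⟩
  · exact ⟨![1, -3, 1, 0, 0], by simp, ![0, -2, 0, 1, 1], by simp, by norm_num⟩
  · exact ⟨![1, 1, -3, 0, 0], by simp, ![0, 0, -2, 1, 1], by simp, by norm_num⟩
  · exact ⟨![1, 1, 1, -4, 0], by simp, ![0, 0, 0, -1, 1], by simp, by norm_num⟩
  · exact ⟨![1, 1, 1, 0, -4], by simp, ![0, 0, 0, 1, -1], by simp, by norm_num⟩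

theorem minkowski_sum_decomposition : Nabla1 + Nabla2 = Nabla := by
  refine subset_antisymm ?_ nabla_subset_nabla1_add_nabla2
  calc Nabla1 + Nabla2
      ⊆ cornerSimplex ![1, 1, 1, 0, 0] (-1) + cornerSimplex ![0, 0, 0, 1, 1] 0 :=
        Set.add_subset_add nabla1_subset_cornerSimplex nabla2_subset_cornerSimplex
    _ ⊆ cornerSimplex (![1, 1, 1, 0, 0] + ![0, 0, 0, 1, 1]) (-1 + 0) :=
        cornerSimplex_add_subset _ _ _ _
    _ = cornerSimplex 1 (-1) := by congr 1 <;> norm_num [funext_iff, Fin.forall_fin_succ]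
    _ ⊆ Nabla := cornerSimplex_subset_nabla
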